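/- For every fixed integer N ≥ 4, the finite sequence j ↦ s_N^{(j)} is non-increasing: s_N^{(j)} ≤ s_N^{(j−1)} for all 1 ≤ j ≤ N−3. -/

import Mathlib

open Real Finset

/-- I_s = [(π−s)/2, (π+s)/2]. -/
noncomputable def Iset (s : ℝ) : Set ℝ := Set.Icc ((Real.pi - s) / 2) ((Real.pi + s) / 2)

/-- F(x₁,…,x_{2r}) = Σ_{m=1}^{r} cos(a_m)cos(b_m)·∏_{ℓ=1}^{m−1} sin(a_ℓ)sin(b_ℓ),
where a_m = x_{2m−1}, b_m = x_{2m}. -/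
noncomputable def Fangle (a b : ℕ → ℝ) (r : ℕ) : ℝ :=
  ∑ m ∈ Finset.Icc 1 r, Real.cos (a m) * Real.cos (b m) *
    ∏ l ∈ Finset.Icc 1 (m - 1), (Real.sin (a l) * Real.sin (b l))

/-- X(x₁,…,x_{2r}) = ∏_{m=1}^{r} sin(a_m)sin(b_m). -/
noncomputable def Xangle (a b : ℕ → ℝ) (r : ℕ) : ℝ :=
  ∏ m ∈ Finset.Icc 1 r, (Real.sin (a m) * Real.sin (b m))

/-- E(m,s) = m·sin²(s/2) − cos(s/2)^{2m} + sin(s/2). -/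
noncomputable def Efun (m : ℕ) (s : ℝ) : ℝ :=
  (m : ℝ) * Real.sin (s / 2) ^ 2 - Real.cos (s / 2) ^ (2 * m) + Real.sin (s / 2)

/-- G(N,j,x,s) = (N−j−2)·sin²(s/2) − sin(x/2)·cos(s/2)^{2(N−j−2)} + sin(s/2). -/
noncomputable def Gfun (N j : ℕ) (x s : ℝ) : ℝ :=
  ((N - j - 2 : ℕ) : ℝ) * Real.sin (s / 2) ^ 2
    - Real.sin (x / 2) * Real.cos (s / 2) ^ (2 * (N - j - 2)) + Real.sin (s / 2)

/-- The sequence s_N^{(j)}: s_N^{(0)} = inf{s > 0 : E(N−2,s) = 0},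
s_N^{(j)} = inf{s > 0 : G(N,j,s_N^{(j−1)},s) = 0}. -/
noncomputable def sSeq (N : ℕ) : ℕ → ℝ
  | 0 => sInf {s : ℝ | 0 < s ∧ Efun (N - 2) s = 0}
  | j + 1 => sInf {s : ℝ | 0 < s ∧ Gfun N (j + 1) (sSeq N j) s = 0}

/-- s is N-good: for all x₁,…,x_{2(N−2)} ∈ I_s,
I_s ⊆ α_{N−1,N}({x₁}×⋯×{x_{2(N−2)}}×(0,π)). -/
def NGood (N : ℕ) (s : ℝ) : Prop :=
  ∀ a b : ℕ → ℝ, (∀ m ∈ Finset.Icc 1 (N - 2), a m ∈ Iset s ∧ b m ∈ Iset s) →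
    ∀ y ∈ Iset s, ∃ φ ∈ Set.Ioo (0 : ℝ) Real.pi,
      Real.arccos (Fangle a b (N - 2) + Real.cos φ * Xangle a b (N - 2)) = y

/-- s is (N,j)-good: for all x₁,…,x_{2(N−j−2)} ∈ I_s,
I_s ⊆ α_{N−j−1,N−j}({x₁}×⋯×{x_{2(N−j−2)}}×I_{s_N^{(j−1)}}). -/
def NjGood (N j : ℕ) (s : ℝ) : Prop :=
  ∀ a b : ℕ → ℝ, (∀ m ∈ Finset.Icc 1 (N - j - 2), a m ∈ Iset s ∧ b m ∈ Iset s) →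
    ∀ y ∈ Iset s, ∃ φ ∈ Iset (sSeq N (j - 1)),
      Real.arccos (Fangle a b (N - j - 2) + Real.cos φ * Xangle a b (N - j - 2)) = y

/-!
Each `s ↦ G(N, j, x, s)` is continuous, equals `-sin (x/2) < 0` at `s = 0` and is
`(N-j-2) sin² (x/2) + sin (x/2) (1 - cos (x/2)^{2(N-j-2)}) ≥ 0` at `s = x`, so for
`x ∈ (0, π]` its first positive zero lies in `(0, x]`. Starting from `s_N^{(0)} ∈ (0, π]`
(the same argument for `E` on `[0, π]`), induction on `j` gives `s_N^{(j)} ∈ (0, s_N^{(j-1)}]`.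
-/

open Filter Topology

lemma sInf_pos_zeros_mem_Ioc {f : ℝ → ℝ} (hf : Continuous f) (h0 : f 0 < 0) {a : ℝ}
    (ha : 0 < a) (hfa : 0 ≤ f a) : sInf {s : ℝ | 0 < s ∧ f s = 0} ∈ Set.Ioc 0 a := by
  obtain ⟨r, hr, hfr⟩ := intermediate_value_Icc ha.le hf.continuousOn ⟨h0.le, hfa⟩
  have hr0 : 0 < r := hr.1.lt_of_ne (by rintro rfl; exact h0.ne hfr)
  have hneg : ∀ᶠ s in 𝓝 0, f s < 0 := hf.continuousAt.eventually_lt continuousAt_const h0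
  obtain ⟨δ, hδ, hball⟩ := Metric.eventually_nhds_iff.mp hneg
  have hbdd : BddBelow {s : ℝ | 0 < s ∧ f s = 0} := ⟨0, fun s hs => hs.1.le⟩
  refine ⟨hδ.trans_le (le_csInf ⟨r, hr0, hfr⟩ fun s hs => ?_),
    (csInf_le hbdd ⟨hr0, hfr⟩).trans hr.2⟩
  -- `f < 0` on `(-δ, δ)`, so every positive zero is at least `δ`.
  by_contra! hsδ
  exact (hball (by rwa [Real.dist_eq, sub_zero, abs_of_pos hs.1])).ne hs.2

lemma continuous_Efun (m : ℕ) : Continuous (Efun m) := by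
  unfold Efun; fun_prop

lemma Efun_zero (m : ℕ) : Efun m 0 = -1 := by
  simp [Efun]

lemma Efun_pi_nonneg (m : ℕ) : 0 ≤ Efun m π := by
  have h : (0 : ℝ) ^ (2 * m) ≤ 1 := pow_le_one₀ le_rfl zero_le_one
  have hm : (0 : ℝ) ≤ m := m.cast_nonneg
  simp only [Efun, sin_pi_div_two, cos_pi_div_two, one_pow, mul_one]
  linarith

lemma continuous_Gfun (N j : ℕ) (x : ℝ) : Continuous (Gfun N j x) := by
  unfold Gfun; fun_prop

lemma Gfun_zero (N j : ℕ) (x : ℝ) : Gfun N j x 0 = -sin (x / 2) := by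
  simp [Gfun]

lemma Gfun_self_nonneg (N j : ℕ) {x : ℝ} (hx : 0 ≤ sin (x / 2)) : 0 ≤ Gfun N j x x := by
  have hcos : cos (x / 2) ^ (2 * (N - j - 2)) ≤ 1 := by
    rw [pow_mul]
    exact pow_le_one₀ (sq_nonneg _) (cos_sq_le_one _)
  have hrest : 0 ≤ sin (x / 2) * (1 - cos (x / 2) ^ (2 * (N - j - 2))) :=
    mul_nonneg hx (sub_nonneg.mpr hcos)
  have hfirst : 0 ≤ ((N - j - 2 : ℕ) : ℝ) * sin (x / 2) ^ 2 := by positivity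
  unfold Gfun
  linarith

lemma sin_half_pos_of_mem_Ioc {x : ℝ} (hx : x ∈ Set.Ioc 0 π) : 0 < sin (x / 2) :=
  sin_pos_of_pos_of_lt_pi (by linarith [hx.1]) (by linarith [hx.2, pi_pos])

lemma sSeq_zero_mem_Ioc (N : ℕ) : sSeq N 0 ∈ Set.Ioc 0 π :=
  sInf_pos_zeros_mem_Ioc (continuous_Efun _) (by rw [Efun_zero]; norm_num) pi_pos
    (Efun_pi_nonneg _)

lemma sSeq_succ_mem_Ioc (N k : ℕ) (hk : sSeq N k ∈ Set.Ioc 0 π) :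
    sSeq N (k + 1) ∈ Set.Ioc 0 (sSeq N k) := by
  have hsin := sin_half_pos_of_mem_Ioc hk
  exact sInf_pos_zeros_mem_Ioc (continuous_Gfun _ _ _) (by rw [Gfun_zero]; linarith) hk.1
    (Gfun_self_nonneg _ _ hsin.le)

lemma sSeq_mem_Ioc (N j : ℕ) : sSeq N j ∈ Set.Ioc 0 π := by
  induction j with
  | zero => exact sSeq_zero_mem_Ioc N
  | succ k ih =>
    obtain ⟨hpos, hle⟩ := sSeq_succ_mem_Ioc N k ih
    exact ⟨hpos, hle.trans ih.2⟩

theorem sSeq_antitone_general (N : ℕ) (j : ℕ) (hj1 : 1 ≤ j) :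
    sSeq N j ≤ sSeq N (j - 1) := by
  obtain ⟨k, rfl⟩ := Nat.exists_eq_add_of_le' hj1
  exact (sSeq_succ_mem_Ioc N k (sSeq_mem_Ioc N k)).2

/-- j ↦ s_N^{(j)} is non-increasing. -/
theorem sSeq_antitone (N : ℕ) (hN : 4 ≤ N) (j : ℕ) (hj1 : 1 ≤ j) (hj2 : j ≤ N - 3) :
    sSeq N j ≤ sSeq N (j - 1) :=
  sSeq_antitone_general N j hj1
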